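/- Let μ₀ be a Borel probability measure on C(D̄) (with the supremum norm), and for y ∈ ℝ^J set Z(y) = ∫ exp(−Φ_LS(v,y)) dμ₀(v), which lies in (0,1]. Then for every ρ > 0 there exists a constant C = C(ρ) such that for all y, y' ∈ ℝ^J with |y| < ρ and |y'| < ρ, one has ∫ ( √(exp(−Φ_LS(v,y))/Z(y)) − √(exp(−Φ_LS(v,y'))/Z(y')) )² dμ₀(v) ≤ C² |y − y'|²; that is, the Hellinger distance between the posterior measures with densities exp(−Φ_LS(·,y))/Z(y) and exp(−Φ_LS(·,y'))/Z(y') with respect to μ₀ is at most C |y − y'|. -/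

import Mathlib

/-!
The misfit `Φ(v, y) = a ⟨Σ⁻¹ (y - K (S ∘ v)), y - K (S ∘ v)⟩` is nonnegative, and since
`‖K (S ∘ v)‖ ≤ ‖K‖ vol D` it is bounded and Lipschitz in `y`, uniformly in `v`, for `‖y‖ < ρ`.
So `Z ≥ e^{-M} > 0` and `Z` is Lipschitz on the ball, and writing
`√(e^{-Φ}/Z) = e^{-Φ/2} Z^{-1/2}` bounds the Hellinger integrand pointwise by `(C ‖y - y'‖)²`.
-/

open MeasureTheory RealInnerProductSpace

noncomputable section

def S (t : ℝ) : ℝ := if 0 < t then 1 else if t < 0 then -1 else 0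

open Classical in
def extend {d : ℕ} (D : Set (EuclideanSpace ℝ (Fin d))) (u : C(closure D, ℝ)) :
    EuclideanSpace ℝ (Fin d) → ℝ :=
  fun x => if h : x ∈ closure D then u ⟨x, h⟩ else 0

open Filter Topology Set

namespace Real

theorem abs_exp_neg_sub_exp_neg_le {s t : ℝ} (hs : 0 ≤ s) (ht : 0 ≤ t) :
    |exp (-s) - exp (-t)| ≤ |s - t| := by
  wlog hst : s ≤ t generalizing s t
  · rw [abs_sub_comm, abs_sub_comm s]
    exact this ht hs (le_of_not_ge hst)
  have hdiff : exp (-s) - exp (-t) = exp (-s) * (1 - exp (-(t - s))) := by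
    rw [mul_sub, mul_one, ← exp_add]; ring_nf
  have hexp : 1 - (t - s) ≤ exp (-(t - s)) := one_sub_le_exp_neg _
  have hs1 : exp (-s) ≤ 1 := exp_le_one_iff.2 (by linarith)
  have hts : exp (-(t - s)) ≤ 1 := exp_le_one_iff.2 (by linarith)
  rw [hdiff, abs_of_nonneg (mul_nonneg (exp_pos _).le (by linarith)), abs_sub_comm,
    abs_of_nonneg (by linarith)]
  nlinarith [exp_pos (-s)]

theorem abs_sqrt_sub_sqrt_le {a b m : ℝ} (hm : 0 < m) (ha : m ≤ a) (hb : m ≤ b) :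
    |√a - √b| ≤ |a - b| / (2 * √m) := by
  have hma : √m ≤ √a := sqrt_le_sqrt ha
  have hmb : √m ≤ √b := sqrt_le_sqrt hb
  have hm' : 0 < √m := sqrt_pos.2 hm
  have hab : a - b = (√a - √b) * (√a + √b) := by
    linear_combination -sq_sqrt (hm.le.trans ha) + sq_sqrt (hm.le.trans hb)
  rw [le_div_iff₀ (by positivity), hab, abs_mul, abs_of_pos (by linarith : 0 < √a + √b)]
  gcongr
  linarith

theorem abs_inv_sqrt_sub_inv_sqrt_le {a b m : ℝ} (hm : 0 < m) (ha : m ≤ a) (hb : m ≤ b) :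
    |(√a)⁻¹ - (√b)⁻¹| ≤ |a - b| / (2 * m * √m) := by
  have hm' : 0 < √m := sqrt_pos.2 hm
  have ha' : √m ≤ √a := sqrt_le_sqrt ha
  have hb' : √m ≤ √b := sqrt_le_sqrt hb
  rw [inv_sub_inv (by linarith) (by linarith), abs_div, abs_sub_comm,
    abs_of_pos (by nlinarith : 0 < √a * √b)]
  calc |√a - √b| / (√a * √b) ≤ |a - b| / (2 * √m) / (√m * √m) := by
        gcongr
        exact abs_sqrt_sub_sqrt_le hm ha hb
    _ = |a - b| / (2 * m * √m) := by
        rw [div_div, mul_self_sqrt hm.le]; ring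

/-- `√(e^{-s}/Z) = e^{-s/2} (√Z)⁻¹`, and both factors are Lipschitz once `Z` is bounded away
from `0`. -/
theorem abs_sqrt_exp_neg_div_sub_le {s t Z Z' m : ℝ} (hs : 0 ≤ s) (ht : 0 ≤ t) (hm : 0 < m)
    (hZ : m ≤ Z) (hZ' : m ≤ Z') :
    |√(exp (-s) / Z) - √(exp (-t) / Z')| ≤ |s - t| / (2 * √m) + |Z - Z'| / (2 * m * √m) := by
  have hsqrt : ∀ u W, √(exp (-u) / W) = exp (-(u / 2)) * (√W)⁻¹ := fun u W => by
    rw [sqrt_div (exp_pos _).le, ← exp_half, div_eq_mul_inv, neg_div]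
  have hZpos : 0 < (√Z)⁻¹ := inv_pos.2 (sqrt_pos.2 (hm.trans_le hZ))
  have hinv : (√Z)⁻¹ ≤ (√m)⁻¹ := inv_anti₀ (sqrt_pos.2 hm) (sqrt_le_sqrt hZ)
  have hexp : |exp (-(s / 2)) - exp (-(t / 2))| ≤ |s - t| / 2 := by
    calc _ ≤ |s / 2 - t / 2| := abs_exp_neg_sub_exp_neg_le (by linarith) (by linarith)
      _ = |s - t| / 2 := by rw [← sub_div, abs_div, abs_two]
  have ht1 : exp (-(t / 2)) ≤ 1 := exp_le_one_iff.2 (by linarith)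
  rw [hsqrt, hsqrt]
  calc |exp (-(s / 2)) * (√Z)⁻¹ - exp (-(t / 2)) * (√Z')⁻¹|
      = |(exp (-(s / 2)) - exp (-(t / 2))) * (√Z)⁻¹ + exp (-(t / 2)) * ((√Z)⁻¹ - (√Z')⁻¹)| := by
        ring_nf
    _ ≤ |s - t| / 2 * (√m)⁻¹ + 1 * (|Z - Z'| / (2 * m * √m)) := by
        refine (abs_add_le _ _).trans (add_le_add ?_ ?_)
        · rw [abs_mul, abs_of_pos hZpos]
          exact mul_le_mul hexp hinv hZpos.le (by positivity)
        · rw [abs_mul, abs_of_pos (exp_pos _)]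
          exact mul_le_mul ht1 (abs_inv_sqrt_sub_inv_sqrt_le hm hZ hZ') (abs_nonneg _) zero_le_one
    _ = |s - t| / (2 * √m) + |Z - Z'| / (2 * m * √m) := by ring

end Real

section Posterior

variable {X : Type*} [MeasurableSpace X] {μ : Measure X}

theorem integral_sq_le_sq_of_abs_le [IsProbabilityMeasure μ] {f : X → ℝ} {c : ℝ}
    (hf : ∀ v, |f v| ≤ c) : ∫ v, f v ^ 2 ∂μ ≤ c ^ 2 := by
  calc ∫ v, f v ^ 2 ∂μ ≤ ∫ _, c ^ 2 ∂μ :=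
        integral_mono_of_nonneg (ae_of_all _ fun v => sq_nonneg _) (integrable_const _)
          (ae_of_all _ fun v => sq_le_sq' (abs_le.1 (hf v)).1 (abs_le.1 (hf v)).2)
    _ = c ^ 2 := by simp

variable {φ ψ : X → ℝ}

theorem integrable_exp_neg [IsFiniteMeasure μ] (hφ : Measurable φ) (hφ0 : ∀ v, 0 ≤ φ v) :
    Integrable (fun v => Real.exp (-φ v)) μ :=
  .of_bound (Real.measurable_exp.comp hφ.neg).aestronglyMeasurable 1 <| ae_of_all _ fun v => by
    simpa [abs_of_pos (Real.exp_pos _)] using hφ0 v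

theorem integral_exp_neg_le_one [IsProbabilityMeasure μ] (hφ0 : ∀ v, 0 ≤ φ v) :
    ∫ v, Real.exp (-φ v) ∂μ ≤ 1 := by
  calc ∫ v, Real.exp (-φ v) ∂μ ≤ ∫ _, (1 : ℝ) ∂μ :=
        integral_mono_of_nonneg (ae_of_all _ fun v => (Real.exp_pos _).le) (integrable_const _)
          (ae_of_all _ fun v => Real.exp_le_one_iff.2 (neg_nonpos.2 (hφ0 v)))
    _ = 1 := by simp

theorem exp_neg_le_integral_exp_neg [IsProbabilityMeasure μ] (hφ : Measurable φ)
    (hφ0 : ∀ v, 0 ≤ φ v) {M : ℝ} (hM : ∀ v, φ v ≤ M) :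
    Real.exp (-M) ≤ ∫ v, Real.exp (-φ v) ∂μ := by
  calc Real.exp (-M) = ∫ _, Real.exp (-M) ∂μ := by simp
    _ ≤ ∫ v, Real.exp (-φ v) ∂μ := integral_mono (integrable_const _)
        (integrable_exp_neg hφ hφ0) fun v => Real.exp_le_exp.2 (neg_le_neg (hM v))

theorem abs_integral_exp_neg_sub_le [IsProbabilityMeasure μ] (hφ : Measurable φ)
    (hψ : Measurable ψ) (hφ0 : ∀ v, 0 ≤ φ v) (hψ0 : ∀ v, 0 ≤ ψ v) {δ : ℝ}
    (hδ : ∀ v, |φ v - ψ v| ≤ δ) :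
    |∫ v, Real.exp (-φ v) ∂μ - ∫ v, Real.exp (-ψ v) ∂μ| ≤ δ := by
  rw [← integral_sub (integrable_exp_neg hφ hφ0) (integrable_exp_neg hψ hψ0)]
  simpa using norm_integral_le_of_norm_le_const (μ := μ)
    (f := fun v => Real.exp (-φ v) - Real.exp (-ψ v)) <| ae_of_all _ fun v =>
      (Real.abs_exp_neg_sub_exp_neg_le (hφ0 v) (hψ0 v)).trans (hδ v)

variable {Y : Type*} [SeminormedAddCommGroup Y] [IsProbabilityMeasure μ] {Φ : X → Y → ℝ}

theorem integral_exp_neg_mem_Ioc (hΦ : ∀ y, Measurable fun v => Φ v y)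
    (hΦ0 : ∀ v y, 0 ≤ Φ v y) (hbound : ∀ ρ, ∃ M, ∀ v y, ‖y‖ < ρ → Φ v y ≤ M) (y : Y) :
    0 < ∫ v, Real.exp (-Φ v y) ∂μ ∧ ∫ v, Real.exp (-Φ v y) ∂μ ≤ 1 := by
  obtain ⟨M, hM⟩ := hbound (‖y‖ + 1)
  exact ⟨(Real.exp_pos (-M)).trans_le <|
      exp_neg_le_integral_exp_neg (hΦ y) (hΦ0 · y) fun v => hM v y (lt_add_one _),
    integral_exp_neg_le_one (hΦ0 · y)⟩

theorem exists_integral_sq_sqrt_posterior_sub_le (hΦ : ∀ y, Measurable fun v => Φ v y)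
    (hΦ0 : ∀ v y, 0 ≤ Φ v y) (hbound : ∀ ρ, ∃ M, ∀ v y, ‖y‖ < ρ → Φ v y ≤ M)
    (hlip : ∀ ρ, ∃ L, ∀ v y y', ‖y‖ < ρ → ‖y'‖ < ρ → |Φ v y - Φ v y'| ≤ L * ‖y - y'‖) (ρ : ℝ) :
    ∃ C : ℝ, ∀ y y' : Y, ‖y‖ < ρ → ‖y'‖ < ρ →
      ∫ v, (√(Real.exp (-Φ v y) / ∫ w, Real.exp (-Φ w y) ∂μ) -
          √(Real.exp (-Φ v y') / ∫ w, Real.exp (-Φ w y') ∂μ)) ^ 2 ∂μ ≤ C ^ 2 * ‖y - y'‖ ^ 2 := by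
  obtain ⟨M, hM⟩ := hbound ρ
  obtain ⟨L, hL⟩ := hlip ρ
  set m := Real.exp (-M)
  have hm : 0 < m := Real.exp_pos _
  refine ⟨L * (1 / (2 * √m) + 1 / (2 * m * √m)), fun y y' hy hy' => ?_⟩
  have hZ : ∀ z : Y, ‖z‖ < ρ → m ≤ ∫ w, Real.exp (-Φ w z) ∂μ := fun z hz =>
    exp_neg_le_integral_exp_neg (hΦ z) (hΦ0 · z) fun v => hM v z hz
  have hZdiff := abs_integral_exp_neg_sub_le (μ := μ) (hΦ y) (hΦ y') (hΦ0 · y) (hΦ0 · y')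
    fun v => hL v y y' hy hy'
  rw [← mul_pow]
  refine integral_sq_le_sq_of_abs_le fun v => ?_
  calc _ ≤ |Φ v y - Φ v y'| / (2 * √m) + |∫ w, Real.exp (-Φ w y) ∂μ -
          ∫ w, Real.exp (-Φ w y') ∂μ| / (2 * m * √m) :=
        Real.abs_sqrt_exp_neg_div_sub_le (hΦ0 v y) (hΦ0 v y') hm (hZ y hy) (hZ y' hy')
    _ ≤ L * ‖y - y'‖ / (2 * √m) + L * ‖y - y'‖ / (2 * m * √m) := by
        gcongr
        exact hL v y y' hy hy'
    _ = L * (1 / (2 * √m) + 1 / (2 * m * √m)) * ‖y - y'‖ := by ring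

end Posterior

section DataMisfit

variable {E : Type*} [NormedAddCommGroup E] [InnerProductSpace ℝ E]

theorem inner_apply_self_nonneg_of_leftInverse {T A : E →L[ℝ] E}
    (hA : ∀ z, z ≠ 0 → 0 < ⟪A z, z⟫) (hAT : ∀ z, A (T z) = z) (e : E) : 0 ≤ ⟪T e, e⟫ := by
  rcases eq_or_ne (T e) 0 with h | h
  · simp [h]
  · calc 0 ≤ ⟪A (T e), T e⟫ := (hA _ h).le
      _ = ⟪T e, e⟫ := by rw [hAT, real_inner_comm]

theorem inner_apply_self_le (T : E →L[ℝ] E) (e : E) : ⟪T e, e⟫ ≤ ‖T‖ * ‖e‖ ^ 2 := by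
  calc ⟪T e, e⟫ ≤ ‖T e‖ * ‖e‖ := real_inner_le_norm _ _
    _ ≤ ‖T‖ * ‖e‖ * ‖e‖ := by gcongr; exact T.le_opNorm e
    _ = ‖T‖ * ‖e‖ ^ 2 := by ring

theorem abs_inner_apply_self_sub_le (T : E →L[ℝ] E) (e e' : E) :
    |⟪T e, e⟫ - ⟪T e', e'⟫| ≤ ‖T‖ * (‖e‖ + ‖e'‖) * ‖e - e'‖ := by
  have hsplit : ⟪T e, e⟫ - ⟪T e', e'⟫ = ⟪T (e - e'), e⟫ + ⟪T e', e - e'⟫ := by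
    simp only [map_sub, inner_sub_left, inner_sub_right]; ring
  rw [hsplit]
  calc |⟪T (e - e'), e⟫ + ⟪T e', e - e'⟫|
      ≤ ‖T (e - e')‖ * ‖e‖ + ‖T e'‖ * ‖e - e'‖ :=
        (abs_add_le _ _).trans (add_le_add (abs_real_inner_le_norm _ _)
          (abs_real_inner_le_norm _ _))
    _ ≤ ‖T‖ * ‖e - e'‖ * ‖e‖ + ‖T‖ * ‖e'‖ * ‖e - e'‖ := by
        gcongr <;> exact T.le_opNorm _
    _ = ‖T‖ * (‖e‖ + ‖e'‖) * ‖e - e'‖ := by ring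

/-- In the level set setting `T = Σ⁻¹`, `a = 1 / (2 ε^{2c})` and `k v = K (S ∘ v)`. -/
def dataMisfit {X : Type*} (a : ℝ) (T : E →L[ℝ] E) (k : X → E) (v : X) (y : E) : ℝ :=
  a * ⟪T (y - k v), y - k v⟫

variable {X : Type*} {a B : ℝ} {T : E →L[ℝ] E} {k : X → E}

theorem measurable_dataMisfit [MeasurableSpace X] [MeasurableSpace E] [OpensMeasurableSpace E]
    (hk : Measurable k) (y : E) : Measurable fun v => dataMisfit a T k v y :=
  (show Continuous fun e => a * ⟪T (y - e), y - e⟫ by fun_prop).measurable.comp hk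

theorem dataMisfit_nonneg (ha : 0 ≤ a) (hT : ∀ e, 0 ≤ ⟪T e, e⟫) (v : X) (y : E) :
    0 ≤ dataMisfit a T k v y :=
  mul_nonneg ha (hT _)

theorem exists_dataMisfit_le (ha : 0 ≤ a) (hk : ∀ v, ‖k v‖ ≤ B) (ρ : ℝ) :
    ∃ M, ∀ v y, ‖y‖ < ρ → dataMisfit a T k v y ≤ M := by
  refine ⟨a * (‖T‖ * (ρ + B) ^ 2), fun v y hy => ?_⟩
  have hyk : ‖y - k v‖ ≤ ρ + B := (norm_sub_le _ _).trans (by linarith [hk v])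
  calc dataMisfit a T k v y ≤ a * (‖T‖ * ‖y - k v‖ ^ 2) := by
        unfold dataMisfit; gcongr; exact inner_apply_self_le T _
    _ ≤ a * (‖T‖ * (ρ + B) ^ 2) := by gcongr

theorem exists_abs_dataMisfit_sub_le (ha : 0 ≤ a) (hk : ∀ v, ‖k v‖ ≤ B) (ρ : ℝ) :
    ∃ L, ∀ v y y', ‖y‖ < ρ → ‖y'‖ < ρ →
      |dataMisfit a T k v y - dataMisfit a T k v y'| ≤ L * ‖y - y'‖ := by
  refine ⟨a * ‖T‖ * (2 * ρ + 2 * B), fun v y y' hy hy' => ?_⟩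
  have hyk : ‖y - k v‖ ≤ ρ + B := (norm_sub_le _ _).trans (by linarith [hk v])
  have hyk' : ‖y' - k v‖ ≤ ρ + B := (norm_sub_le _ _).trans (by linarith [hk v])
  calc |dataMisfit a T k v y - dataMisfit a T k v y'|
      = a * |⟪T (y - k v), y - k v⟫ - ⟪T (y' - k v), y' - k v⟫| := by
        rw [dataMisfit, dataMisfit, ← mul_sub, abs_mul, abs_of_nonneg ha]
    _ ≤ a * (‖T‖ * (‖y - k v‖ + ‖y' - k v‖) * ‖y - y'‖) := by
        gcongr
        simpa using abs_inner_apply_self_sub_le T (y - k v) (y' - k v)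
    _ ≤ a * (‖T‖ * ((ρ + B) + (ρ + B)) * ‖y - y'‖) := by gcongr
    _ = a * ‖T‖ * (2 * ρ + 2 * B) * ‖y - y'‖ := by ring

end DataMisfit

section L1Bounded

variable {α F : Type*} [MeasurableSpace α] {μ : Measure α} [NormedAddCommGroup F]
  {K : (α → ℝ) → F} {CK : ℝ}

theorem norm_apply_sub_apply_le
    (hK_add : ∀ u v, Integrable u μ → Integrable v μ → K (u + v) = K u + K v)
    (hK_bdd : ∀ u, Integrable u μ → ‖K u‖ ≤ CK * ∫ x, |u x| ∂μ) {u w : α → ℝ}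
    (hu : Integrable u μ) (hw : Integrable w μ) :
    ‖K u - K w‖ ≤ CK * ∫ x, |u x - w x| ∂μ := by
  have hsplit := hK_add w (u - w) hw (hu.sub hw)
  rw [add_sub_cancel] at hsplit
  rw [hsplit, add_sub_cancel_left]
  exact hK_bdd _ (hu.sub hw)

theorem norm_apply_le_of_abs_le [IsFiniteMeasure μ]
    (hK_bdd : ∀ u, Integrable u μ → ‖K u‖ ≤ CK * ∫ x, |u x| ∂μ) {u : α → ℝ} {b : ℝ}
    (hu : AEStronglyMeasurable u μ) (hb : ∀ x, |u x| ≤ b) :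
    ‖K u‖ ≤ |CK| * (b * μ.real univ) := by
  have hint : ∫ x, |u x| ∂μ ≤ b * μ.real univ :=
    (Real.le_norm_self _).trans <| norm_integral_le_of_norm_le_const <| ae_of_all _ fun x => by
      simpa using hb x
  calc ‖K u‖ ≤ CK * ∫ x, |u x| ∂μ := hK_bdd u (.of_bound hu b (ae_of_all _ hb))
    _ ≤ |CK| * ∫ x, |u x| ∂μ :=
        mul_le_mul_of_nonneg_right (le_abs_self _) (integral_nonneg fun x => abs_nonneg _)
    _ ≤ |CK| * (b * μ.real univ) := by gcongr

theorem tendsto_apply_of_tendsto_of_abs_le [IsFiniteMeasure μ]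
    (hK_add : ∀ u v, Integrable u μ → Integrable v μ → K (u + v) = K u + K v)
    (hK_bdd : ∀ u, Integrable u μ → ‖K u‖ ≤ CK * ∫ x, |u x| ∂μ)
    {ι : Type*} {l : Filter ι} [l.IsCountablyGenerated] {u : ι → α → ℝ} {f : α → ℝ} {b : ℝ}
    (hu : ∀ i, AEStronglyMeasurable (u i) μ) (hf : AEStronglyMeasurable f μ)
    (hub : ∀ i x, |u i x| ≤ b) (hfb : ∀ x, |f x| ≤ b)
    (hlim : ∀ x, Tendsto (fun i => u i x) l (𝓝 (f x))) :
    Tendsto (fun i => K (u i)) l (𝓝 (K f)) := by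
  have hint : ∀ g : α → ℝ, AEStronglyMeasurable g μ → (∀ x, |g x| ≤ b) → Integrable g μ :=
    fun g hg hgb => .of_bound hg b (ae_of_all _ hgb)
  have hL1 : Tendsto (fun i => ∫ x, |u i x - f x| ∂μ) l (𝓝 0) := by
    simpa using tendsto_integral_filter_of_dominated_convergence
      (F := fun i x => |u i x - f x|) (fun _ => 2 * b)
      (.of_forall fun i => ((hu i).sub hf).norm)
      (.of_forall fun i => ae_of_all _ fun x => by
        rw [Real.norm_eq_abs, abs_abs]
        linarith [abs_sub (u i x) (f x), hub i x, hfb x])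
      (integrable_const _) (ae_of_all _ fun x => ((hlim x).sub tendsto_const_nhds).abs)
  rw [tendsto_iff_norm_sub_tendsto_zero]
  refine squeeze_zero (fun _ => norm_nonneg _) (fun i => norm_apply_sub_apply_le hK_add
    hK_bdd (hint _ (hu i) (hub i)) (hint _ hf hfb)) ?_
  simpa using hL1.const_mul CK

end L1Bounded

theorem measurable_S : Measurable S :=
  measurable_const.ite measurableSet_Ioi (measurable_const.ite measurableSet_Iio measurable_const)

theorem abs_S_le_one (t : ℝ) : |S t| ≤ 1 := by
  unfold S; split_ifs <;> simp

def ramp (n : ℕ) (t : ℝ) : ℝ := max (-1) (min (n * t) 1)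

theorem continuous_ramp (n : ℕ) : Continuous (ramp n) := by
  unfold ramp; fun_prop

theorem abs_ramp_le_one (n : ℕ) (t : ℝ) : |ramp n t| ≤ 1 :=
  abs_le.2 ⟨le_max_left _ _, max_le (by norm_num) (min_le_right _ _)⟩

theorem tendsto_ramp (t : ℝ) : Tendsto (fun n => ramp n t) atTop (𝓝 (S t)) := by
  rcases lt_trichotomy t 0 with ht | rfl | ht
  · have hev : ∀ᶠ n : ℕ in atTop, (n : ℝ) * t ≤ -1 :=
      (tendsto_natCast_atTop_atTop.atTop_mul_const_of_neg ht).eventually_le_atBot _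
    refine tendsto_const_nhds.congr' (hev.mono fun n hn => ?_)
    show S t = ramp n t
    rw [ramp, min_eq_left (by linarith), max_eq_left hn, S, if_neg ht.not_gt, if_pos ht]
  · simp [S, ramp]
  · have hev : ∀ᶠ n : ℕ in atTop, 1 ≤ (n : ℝ) * t :=
      (tendsto_natCast_atTop_atTop.atTop_mul_const ht).eventually_ge_atTop _
    refine tendsto_const_nhds.congr' (hev.mono fun n hn => ?_)
    simp [S, ramp, ht, hn]

theorem isCompact_closure_ofLp_preimage_pi_Ioo {ι : Type*} [Fintype ι] (a b : ι → ℝ) :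
    IsCompact (closure ((WithLp.ofLp : EuclideanSpace ℝ ι → (ι → ℝ)) ⁻¹'
      (univ.pi fun i => Ioo (a i) (b i)))) :=
  ((PiLp.homeomorph 2 _).isCompact_preimage.2 (isCompact_univ_pi fun _ => isCompact_Icc)
    ).closure_of_subset (preimage_mono (pi_mono fun _ _ => Ioo_subset_Icc_self))

section Extend

variable {d : ℕ} {D : Set (EuclideanSpace ℝ (Fin d))}

theorem measurable_extend (u : C(closure D, ℝ)) : Measurable (extend D u) := by
  classical
  exact Measurable.dite u.continuous.measurable measurable_const measurableSet_closure

theorem continuous_extend_apply (x : EuclideanSpace ℝ (Fin d)) :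
    Continuous fun u : C(closure D, ℝ) => extend D u x := by
  by_cases hx : x ∈ closure D
  · simpa [_root_.extend, hx] using continuous_eval_const (⟨x, hx⟩ : closure D)
  · simpa [_root_.extend, hx] using continuous_const

variable [CompactSpace (closure D)] {μ : Measure (EuclideanSpace ℝ (Fin d))} [IsFiniteMeasure μ]
  {F : Type*} [NormedAddCommGroup F] {K : (EuclideanSpace ℝ (Fin d) → ℝ) → F} {CK : ℝ}
  (hK_add : ∀ u v, Integrable u μ → Integrable v μ → K (u + v) = K u + K v)
  (hK_bdd : ∀ u, Integrable u μ → ‖K u‖ ≤ CK * ∫ x, |u x| ∂μ)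
include hK_add hK_bdd

theorem continuous_comp_extend {g : ℝ → ℝ} (hg : Continuous g) {b : ℝ} (hgb : ∀ t, |g t| ≤ b) :
    Continuous fun u : C(closure D, ℝ) => K (g ∘ extend D u) :=
  continuous_iff_continuousAt.2 fun u => tendsto_apply_of_tendsto_of_abs_le hK_add hK_bdd
    (fun v => (hg.measurable.comp (measurable_extend v)).aestronglyMeasurable)
    (hg.measurable.comp (measurable_extend u)).aestronglyMeasurable (fun _ _ => hgb _)
    (fun _ => hgb _) fun x => (hg.tendsto _).comp ((continuous_extend_apply x).tendsto u)

/-- Although `S` is discontinuous, `u ↦ K (S ∘ extend D u)` is a pointwise limit of the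
continuous maps `u ↦ K (ramp n ∘ extend D u)`, by dominated convergence. -/
theorem measurable_comp_S_extend [MeasurableSpace C(closure D, ℝ)]
    [OpensMeasurableSpace C(closure D, ℝ)] [MeasurableSpace F] [BorelSpace F] :
    Measurable fun u : C(closure D, ℝ) => K (S ∘ extend D u) :=
  measurable_of_tendsto_metrizable' atTop
    (fun n => (continuous_comp_extend hK_add hK_bdd (continuous_ramp n)
      (abs_ramp_le_one n)).measurable)
    (tendsto_pi_nhds.2 fun u => tendsto_apply_of_tendsto_of_abs_le hK_add hK_bdd
      (fun n => ((continuous_ramp n).measurable.comp (measurable_extend u)).aestronglyMeasurable)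
      (measurable_S.comp (measurable_extend u)).aestronglyMeasurable
      (fun n _ => abs_ramp_le_one n _) (fun _ => abs_S_le_one _) fun _ => tendsto_ramp _)

end Extend

theorem stmt_10_general
    (d J : ℕ)
    -- D = (0,1)^d ⊂ ℝ^d, the open unit cube
    (D : Set (EuclideanSpace ℝ (Fin d)))
    (hD : D = (WithLp.ofLp : EuclideanSpace ℝ (Fin d) → (Fin d → ℝ)) ⁻¹' (Set.univ.pi fun _ => Set.Ioo (0 : ℝ) 1))
    -- K : L¹(D) → ℝ^J bounded linear operator (modelled via its action on integrable
    -- representatives: additive, homogeneous and bounded by the L¹(D)-norm)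
    (K : (EuclideanSpace ℝ (Fin d) → ℝ) → EuclideanSpace ℝ (Fin J))
    (CK : ℝ)
    (hK_add : ∀ u v, IntegrableOn u D → IntegrableOn v D → K (u + v) = K u + K v)
    (hK_bdd : ∀ u, IntegrableOn u D → ‖K u‖ ≤ CK * ∫ x in D, |u x|)
    -- Σ : symmetric positive definite J×J matrix, with inverse Σ⁻¹;
    -- |Σ^{-1/2} e|² := ⟨Σ⁻¹ e, e⟩
    (Sig Siginv : EuclideanSpace ℝ (Fin J) →L[ℝ] EuclideanSpace ℝ (Fin J))
    (hSig_pos : ∀ z, z ≠ 0 → 0 < ⟪Sig z, z⟫)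
    (hSiginv : ∀ z, Sig (Siginv z) = z ∧ Siginv (Sig z) = z)
    -- constants
    (ε c : ℝ) (hε : ε ∈ Set.Ioo (0 : ℝ) 1)
    -- the level set data misfit Φ_LS, as a function of continuous functions on D̄
    (ΦLS : C(closure D, ℝ) → EuclideanSpace ℝ (Fin J) → ℝ)
    (hΦLS : ∀ v y, ΦLS v y = (1 / (2 * ε ^ (2 * c))) *
      ⟪Siginv (y - K (S ∘ extend D v)), y - K (S ∘ extend D v)⟫)
    -- μ₀ : Borel probability measure on C(D̄)
    [MeasurableSpace C(closure D, ℝ)] [BorelSpace C(closure D, ℝ)]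
    (μ₀ : Measure C(closure D, ℝ)) [IsProbabilityMeasure μ₀]
    -- the normalization constant
    (Z : EuclideanSpace ℝ (Fin J) → ℝ)
    (hZ : ∀ y, Z y = ∫ v, Real.exp (-ΦLS v y) ∂μ₀) :
    (∀ y, 0 < Z y ∧ Z y ≤ 1) ∧
    ∀ ρ > (0 : ℝ), ∃ C : ℝ,
      ∀ y y' : EuclideanSpace ℝ (Fin J), ‖y‖ < ρ → ‖y'‖ < ρ →
        (∫ v, (Real.sqrt (Real.exp (-ΦLS v y) / Z y) -
            Real.sqrt (Real.exp (-ΦLS v y') / Z y')) ^ 2 ∂μ₀) ≤ C ^ 2 * ‖y - y'‖ ^ 2 := by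
  have hcube : IsCompact (closure D) := hD ▸ isCompact_closure_ofLp_preimage_pi_Ioo _ _
  have : CompactSpace (closure D) := isCompact_iff_compactSpace.1 hcube
  have : IsFiniteMeasure (volume.restrict D) :=
    isFiniteMeasure_restrict.2 ((measure_mono subset_closure).trans_lt hcube.measure_lt_top).ne
  have hk : Measurable fun v : C(closure D, ℝ) => K (S ∘ extend D v) :=
    measurable_comp_S_extend hK_add hK_bdd
  have hk_le (v : C(closure D, ℝ)) : ‖K (S ∘ extend D v)‖ ≤ |CK| * (1 * volume.real D) := by
    simpa using norm_apply_le_of_abs_le hK_bdd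
      (measurable_S.comp (measurable_extend v)).aestronglyMeasurable fun _ => abs_S_le_one _
  have ha : 0 ≤ 1 / (2 * ε ^ (2 * c)) := by
    have := Real.rpow_pos_of_pos hε.1 (2 * c)
    positivity
  obtain rfl : ΦLS = dataMisfit (1 / (2 * ε ^ (2 * c))) Siginv
      fun v => K (S ∘ extend D v) := funext₂ hΦLS
  obtain rfl := funext hZ
  have hΦ0 := dataMisfit_nonneg (k := fun v => K (S ∘ extend D v)) ha
    (inner_apply_self_nonneg_of_leftInverse hSig_pos fun z => (hSiginv z).1)
  exact ⟨integral_exp_neg_mem_Ioc (measurable_dataMisfit hk) hΦ0 (exists_dataMisfit_le ha hk_le),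
    fun ρ _ => exists_integral_sq_sqrt_posterior_sub_le (measurable_dataMisfit hk) hΦ0
      (exists_dataMisfit_le ha hk_le) (exists_abs_dataMisfit_sub_le ha hk_le) ρ⟩

/-- Let μ₀ be a Borel probability measure on C(D̄) (with the supremum norm),
and for y ∈ ℝ^J set Z(y) = ∫ exp(−Φ_LS(v,y)) dμ₀(v), which lies in (0,1]. Then for every
ρ > 0 there exists C = C(ρ) such that for all y, y' with |y| < ρ, |y'| < ρ, the squared
Hellinger-type integral
∫ ( √(exp(−Φ_LS(v,y))/Z(y)) − √(exp(−Φ_LS(v,y'))/Z(y')) )² dμ₀(v) is at most C²|y − y'|². -/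
theorem stmt_10
    (d J : ℕ)
    -- D = (0,1)^d ⊂ ℝ^d, the open unit cube
    (D : Set (EuclideanSpace ℝ (Fin d)))
    (hD : D = (WithLp.ofLp : EuclideanSpace ℝ (Fin d) → (Fin d → ℝ)) ⁻¹' (Set.univ.pi fun _ => Set.Ioo (0 : ℝ) 1))
    -- K : L¹(D) → ℝ^J bounded linear operator (modelled via its action on integrable
    -- representatives: additive, homogeneous and bounded by the L¹(D)-norm)
    (K : (EuclideanSpace ℝ (Fin d) → ℝ) → EuclideanSpace ℝ (Fin J))
    (CK : ℝ)
    (hK_add : ∀ u v, IntegrableOn u D → IntegrableOn v D → K (u + v) = K u + K v)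
    (hK_smul : ∀ (a : ℝ) u, IntegrableOn u D → K (a • u) = a • K u)
    (hK_bdd : ∀ u, IntegrableOn u D → ‖K u‖ ≤ CK * ∫ x in D, |u x|)
    -- Σ : symmetric positive definite J×J matrix, with inverse Σ⁻¹;
    -- |Σ^{-1/2} e|² := ⟨Σ⁻¹ e, e⟩
    (Sig Siginv : EuclideanSpace ℝ (Fin J) →L[ℝ] EuclideanSpace ℝ (Fin J))
    (hSig_sym : ∀ z w, ⟪Sig z, w⟫ = ⟪z, Sig w⟫)
    (hSig_pos : ∀ z, z ≠ 0 → 0 < ⟪Sig z, z⟫)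
    (hSiginv : ∀ z, Sig (Siginv z) = z ∧ Siginv (Sig z) = z)
    -- constants
    (ε c : ℝ) (hε : ε ∈ Set.Ioo (0 : ℝ) 1) (hc : 0 ≤ c)
    -- the level set data misfit Φ_LS, as a function of continuous functions on D̄
    (ΦLS : C(closure D, ℝ) → EuclideanSpace ℝ (Fin J) → ℝ)
    (hΦLS : ∀ v y, ΦLS v y = (1 / (2 * ε ^ (2 * c))) *
      ⟪Siginv (y - K (S ∘ extend D v)), y - K (S ∘ extend D v)⟫)
    -- μ₀ : Borel probability measure on C(D̄)
    [MeasurableSpace C(closure D, ℝ)] [BorelSpace C(closure D, ℝ)]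
    (μ₀ : Measure C(closure D, ℝ)) [IsProbabilityMeasure μ₀]
    -- the normalization constant
    (Z : EuclideanSpace ℝ (Fin J) → ℝ)
    (hZ : ∀ y, Z y = ∫ v, Real.exp (-ΦLS v y) ∂μ₀) :
    (∀ y, 0 < Z y ∧ Z y ≤ 1) ∧
    ∀ ρ > (0 : ℝ), ∃ C : ℝ,
      ∀ y y' : EuclideanSpace ℝ (Fin J), ‖y‖ < ρ → ‖y'‖ < ρ →
        (∫ v, (Real.sqrt (Real.exp (-ΦLS v y) / Z y) -
            Real.sqrt (Real.exp (-ΦLS v y') / Z y')) ^ 2 ∂μ₀) ≤ C ^ 2 * ‖y - y'‖ ^ 2 :=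
  stmt_10_general d J D hD K CK hK_add hK_bdd Sig Siginv hSig_pos hSiginv ε c hε ΦLS hΦLS μ₀ Z hZ
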